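/- arXiv:1610.08774 — 4 statements merged into one kernel-verified Lean document; each statement's English description precedes it below -/
import Mathlib

section
/- For a differential bundle 𝗊, to have a Finsler connection is precisely to have a vertical connection: if R : T(E) → E₂ is a Finsler connection then Rπ₀ : T(E) → E is a vertical connection; if K : T(E) → E is a vertical connection then ⟨K, p⟩ : T(E) → E₂ is a Finsler connection; and these two constructions are mutually inverse bijections between Finsler connections and vertical connections on 𝗊. -/
open CategoryTheory CategoryTheory.Limits

open scoped Classical

universe v u

variable {C : Type u} [Category.{v} C]

/-- Chosen pullback: explicit pullback data for a cospan `f : A ⟶ Z ⟵ B : g`. -/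
structure ChosenPB {A B Z : C} (f : A ⟶ Z) (g : B ⟶ Z) where
  P : C
  pr0 : P ⟶ A
  pr1 : P ⟶ B
  comm : pr0 ≫ f = pr1 ≫ g
  pair : ∀ {X : C} (u : X ⟶ A) (v : X ⟶ B), u ≫ f = v ≫ g → (X ⟶ P)
  pair_pr0 : ∀ {X : C} (u : X ⟶ A) (v : X ⟶ B) (h : u ≫ f = v ≫ g),
    pair u v h ≫ pr0 = u
  pair_pr1 : ∀ {X : C} (u : X ⟶ A) (v : X ⟶ B) (h : u ≫ f = v ≫ g),
    pair u v h ≫ pr1 = v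
  hom_ext : ∀ {X : C} (w w' : X ⟶ P),
    w ≫ pr0 = w' ≫ pr0 → w ≫ pr1 = w' ≫ pr1 → w = w'

/-- Witness that the endofunctor `T` preserves the chosen pullback `PB`. -/
structure PBLift (T : C ⥤ C) {A B Z : C} {f : A ⟶ Z} {g : B ⟶ Z} (PB : ChosenPB f g) where
  pair : ∀ {X : C} (u : X ⟶ T.obj A) (v : X ⟶ T.obj B),
    u ≫ T.map f = v ≫ T.map g → (X ⟶ T.obj PB.P)
  pair_pr0 : ∀ {X : C} (u : X ⟶ T.obj A) (v : X ⟶ T.obj B)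
    (h : u ≫ T.map f = v ≫ T.map g), pair u v h ≫ T.map PB.pr0 = u
  pair_pr1 : ∀ {X : C} (u : X ⟶ T.obj A) (v : X ⟶ T.obj B)
    (h : u ≫ T.map f = v ≫ T.map g), pair u v h ≫ T.map PB.pr1 = v
  hom_ext : ∀ {X : C} (w w' : X ⟶ T.obj PB.P),
    w ≫ T.map PB.pr0 = w' ≫ T.map PB.pr0 → w ≫ T.map PB.pr1 = w' ≫ T.map PB.pr1 → w = w'

/-- The image of a preserved chosen pullback is again a chosen pullback. -/
def PBLift.toChosenPB {T : C ⥤ C} {A B Z : C} {f : A ⟶ Z} {g : B ⟶ Z} {PB : ChosenPB f g}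
    (L : PBLift T PB) : ChosenPB (T.map f) (T.map g) where
  P := T.obj PB.P
  pr0 := T.map PB.pr0
  pr1 := T.map PB.pr1
  comm := by rw [← T.map_comp, ← T.map_comp, PB.comm]
  pair := L.pair
  pair_pr0 := L.pair_pr0
  pair_pr1 := L.pair_pr1
  hom_ext := L.hom_ext

/-- Iterated endofunctor `Tⁿ`. -/
def fpow (T : C ⥤ C) : ℕ → C ⥤ C
  | 0 => 𝟭 C
  | n + 1 => fpow T n ⋙ T

/-- A tangent category in the sense of Cockett–Cruttwell, presented with chosen
pullbacks `T₂M` of `p_M` along itself (preserved by each `Tⁿ`), addition `+`,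
projection `p`, zero `0`, vertical lift `ℓ` and canonical flip `c`, together
with the universality of the vertical lift. Sums, associativity etc. are
expressed in generalized-element form via the chosen pullback pairings. -/
structure TangentCat (C : Type u) [Category.{v} C] where
  T : C ⥤ C
  p : T ⟶ 𝟭 C
  zero : 𝟭 C ⟶ T
  l : T ⟶ T ⋙ T
  c : T ⋙ T ⟶ T ⋙ T
  T2 : ∀ M : C, ChosenPB (p.app M) (p.app M)
  T2T : ∀ M : C, PBLift T (T2 M)
  T2Tn : ∀ (M : C) (n : ℕ), PBLift (fpow T n) (T2 M)
  add : ∀ M : C, (T2 M).P ⟶ T.obj M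
  add_nat : ∀ {M N : C} (f : M ⟶ N) {X : C} (u v : X ⟶ T.obj M)
    (h : u ≫ p.app M = v ≫ p.app M)
    (h' : (u ≫ T.map f) ≫ p.app N = (v ≫ T.map f) ≫ p.app N),
    (T2 M).pair u v h ≫ add M ≫ T.map f
      = (T2 N).pair (u ≫ T.map f) (v ≫ T.map f) h' ≫ add N
  zero_p : ∀ M : C, zero.app M ≫ p.app M = 𝟙 M
  add_p : ∀ M : C, add M ≫ p.app M = (T2 M).pr0 ≫ p.app M
  add_comm' : ∀ (M : C) {X : C} (f g : X ⟶ T.obj M) (h : f ≫ p.app M = g ≫ p.app M),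
    (T2 M).pair f g h ≫ add M = (T2 M).pair g f h.symm ≫ add M
  add_assoc' : ∀ (M : C) {X : C} (f g k : X ⟶ T.obj M)
    (h1 : f ≫ p.app M = g ≫ p.app M) (h2 : g ≫ p.app M = k ≫ p.app M)
    (h3 : ((T2 M).pair f g h1 ≫ add M) ≫ p.app M = k ≫ p.app M)
    (h4 : f ≫ p.app M = ((T2 M).pair g k h2 ≫ add M) ≫ p.app M),
    (T2 M).pair ((T2 M).pair f g h1 ≫ add M) k h3 ≫ add M
      = (T2 M).pair f ((T2 M).pair g k h2 ≫ add M) h4 ≫ add M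
  add_zero' : ∀ (M : C) {X : C} (f : X ⟶ T.obj M)
    (h : f ≫ p.app M = (f ≫ p.app M ≫ zero.app M) ≫ p.app M),
    (T2 M).pair f (f ≫ p.app M ≫ zero.app M) h ≫ add M = f
  l_Tp : ∀ M : C, l.app M ≫ T.map (p.app M) = p.app M ≫ zero.app M
  l_zero : ∀ M : C, zero.app M ≫ l.app M = zero.app M ≫ T.map (zero.app M)
  l_add : ∀ (M : C) {X : C} (f g : X ⟶ T.obj M) (h : f ≫ p.app M = g ≫ p.app M),
    ∃ w : X ⟶ T.obj (T2 M).P,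
      w ≫ T.map (T2 M).pr0 = f ≫ l.app M ∧ w ≫ T.map (T2 M).pr1 = g ≫ l.app M ∧
      (T2 M).pair f g h ≫ add M ≫ l.app M = w ≫ T.map (add M)
  c_p : ∀ M : C, c.app M ≫ p.app (T.obj M) = T.map (p.app M)
  c_zero : ∀ M : C, T.map (zero.app M) ≫ c.app M = zero.app (T.obj M)
  c_add : ∀ (M : C) {X : C} (u v : X ⟶ T.obj (T.obj M))
    (h : u ≫ T.map (p.app M) = v ≫ T.map (p.app M))
    (h' : (u ≫ c.app M) ≫ p.app (T.obj M) = (v ≫ c.app M) ≫ p.app (T.obj M)),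
    ∃ w : X ⟶ T.obj (T2 M).P,
      w ≫ T.map (T2 M).pr0 = u ∧ w ≫ T.map (T2 M).pr1 = v ∧
      w ≫ T.map (add M) ≫ c.app M
        = (T2 (T.obj M)).pair (u ≫ c.app M) (v ≫ c.app M) h' ≫ add (T.obj M)
  l_c : ∀ M : C, l.app M ≫ c.app M = l.app M
  c_c : ∀ M : C, c.app M ≫ c.app M = 𝟙 (T.obj (T.obj M))
  l_l : ∀ M : C, l.app M ≫ T.map (l.app M) = l.app M ≫ l.app (T.obj M)
  c_T_c : ∀ M : C, c.app (T.obj M) ≫ T.map (c.app M) ≫ c.app (T.obj M)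
    = T.map (c.app M) ≫ c.app (T.obj M) ≫ T.map (c.app M)
  l_T_c : ∀ M : C, l.app (T.obj M) ≫ T.map (c.app M) ≫ c.app (T.obj M)
    = c.app M ≫ T.map (l.app M)
  vmu : ∀ M : C, (T2 M).P ⟶ T.obj (T.obj M)
  vmu_spec : ∀ M : C, ∃ w : (T2 M).P ⟶ T.obj (T2 M).P,
    w ≫ T.map (T2 M).pr0 = (T2 M).pr0 ≫ l.app M ∧
    w ≫ T.map (T2 M).pr1 = (T2 M).pr1 ≫ zero.app (T.obj M) ∧
    vmu M = w ≫ T.map (add M)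
  vlift : ∀ {X M : C} (f : X ⟶ T.obj (T.obj M)),
    f ≫ T.map (p.app M) = f ≫ T.map (p.app M) ≫ p.app M ≫ zero.app M → (X ⟶ (T2 M).P)
  vlift_vmu : ∀ {X M : C} (f : X ⟶ T.obj (T.obj M))
    (h : f ≫ T.map (p.app M) = f ≫ T.map (p.app M) ≫ p.app M ≫ zero.app M),
    vlift f h ≫ vmu M = f
  vmu_mono : ∀ {X M : C} (w w' : X ⟶ (T2 M).P), w ≫ vmu M = w' ≫ vmu M → w = w'

/-- Negatives: each tangent bundle is a commutative group bundle. -/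
structure HasNegatives {C : Type u} [Category.{v} C] (D : TangentCat C) where
  neg : ∀ M : C, D.T.obj M ⟶ D.T.obj M
  neg_p : ∀ M : C, neg M ≫ D.p.app M = D.p.app M
  neg_add : ∀ (M : C) {X : C} (f : X ⟶ D.T.obj M)
    (h : f ≫ D.p.app M = (f ≫ neg M) ≫ D.p.app M),
    (D.T2 M).pair f (f ≫ neg M) h ≫ D.add M = f ≫ D.p.app M ≫ D.zero.app M

/-- Fibrewise sum of two maps into a tangent bundle (defined when the maps
agree under `p`; otherwise a default value). -/
noncomputable def TangentCat.hadd (D : TangentCat C) {X M : C}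
    (f g : X ⟶ D.T.obj M) : X ⟶ D.T.obj M :=
  if h : f ≫ D.p.app M = g ≫ D.p.app M then (D.T2 M).pair f g h ≫ D.add M else f

/-- Fibrewise difference `f - g` of two maps into a tangent bundle. -/
noncomputable def TangentCat.sub (D : TangentCat C) (N : HasNegatives D) {X M : C}
    (f g : X ⟶ D.T.obj M) : X ⟶ D.T.obj M :=
  D.hadd f (g ≫ N.neg M)

/-- The bracketing operation `{f}` for the tangent bundle, obtained from the
universality (equalizer property) of the vertical lift. -/
noncomputable def TangentCat.brkT (D : TangentCat C) {X M : C}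
    (f : X ⟶ D.T.obj (D.T.obj M)) : X ⟶ D.T.obj M :=
  if h : f ≫ D.T.map (D.p.app M) = f ≫ D.T.map (D.p.app M) ≫ D.p.app M ≫ D.zero.app M
  then D.vlift f h ≫ (D.T2 M).pr0 else f ≫ D.p.app (D.T.obj M)

/-- The Lie bracket of vector fields: `[w₁,w₂] = {w₁T(w₂) − w₂T(w₁)c}`. -/
noncomputable def TangentCat.lie (D : TangentCat C) (N : HasNegatives D) {M : C}
    (w1 w2 : M ⟶ D.T.obj M) : M ⟶ D.T.obj M :=
  D.brkT (D.sub N (w1 ≫ D.T.map w2) (w2 ≫ D.T.map w1 ≫ D.c.app M))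

/-- A differential bundle `𝗊 = (q, +_q, 0_q, λ)` on `E` over `M` in the tangent
category `D`, with chosen pullbacks `E₂` (of `q` along itself) and
`T(M) ×_M E` (of `p_M` along `q`), both preserved by each `Tⁿ`, together with
the lift axioms and the universality of the lift (in equalizer form). -/
structure DiffBundle {C : Type u} [Category.{v} C] (D : TangentCat C) (E M : C) where
  q : E ⟶ M
  E2 : ChosenPB q q
  TE2 : PBLift D.T E2
  TE2n : ∀ n : ℕ, PBLift (fpow D.T n) E2
  P : ChosenPB (D.p.app M) q
  TP : PBLift D.T P
  TPn : ∀ n : ℕ, PBLift (fpow D.T n) P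
  addq : E2.P ⟶ E
  zeroq : M ⟶ E
  lam : E ⟶ D.T.obj E
  addq_q : addq ≫ q = E2.pr0 ≫ q
  zeroq_q : zeroq ≫ q = 𝟙 M
  addq_comm : ∀ {X : C} (f g : X ⟶ E) (h : f ≫ q = g ≫ q),
    E2.pair f g h ≫ addq = E2.pair g f h.symm ≫ addq
  addq_assoc : ∀ {X : C} (f g k : X ⟶ E)
    (h1 : f ≫ q = g ≫ q) (h2 : g ≫ q = k ≫ q)
    (h3 : (E2.pair f g h1 ≫ addq) ≫ q = k ≫ q)
    (h4 : f ≫ q = (E2.pair g k h2 ≫ addq) ≫ q),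
    E2.pair (E2.pair f g h1 ≫ addq) k h3 ≫ addq
      = E2.pair f (E2.pair g k h2 ≫ addq) h4 ≫ addq
  addq_zero : ∀ {X : C} (f : X ⟶ E) (h : f ≫ q = (f ≫ q ≫ zeroq) ≫ q),
    E2.pair f (f ≫ q ≫ zeroq) h ≫ addq = f
  lam_Tq : lam ≫ D.T.map q = q ≫ D.zero.app M
  lam_zero1 : zeroq ≫ lam = D.zero.app M ≫ D.T.map zeroq
  lam_add1 : ∀ {X : C} (f g : X ⟶ E) (h : f ≫ q = g ≫ q),
    ∃ w : X ⟶ D.T.obj E2.P,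
      w ≫ D.T.map E2.pr0 = f ≫ lam ∧ w ≫ D.T.map E2.pr1 = g ≫ lam ∧
      E2.pair f g h ≫ addq ≫ lam = w ≫ D.T.map addq
  lam_p : lam ≫ D.p.app E = q ≫ zeroq
  lam_zero2 : zeroq ≫ lam = zeroq ≫ D.zero.app E
  lam_add2 : ∀ {X : C} (f g : X ⟶ E) (h : f ≫ q = g ≫ q)
    (h' : (f ≫ lam) ≫ D.p.app E = (g ≫ lam) ≫ D.p.app E),
    E2.pair f g h ≫ addq ≫ lam = (D.T2 E).pair (f ≫ lam) (g ≫ lam) h' ≫ D.add E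
  lam_l : lam ≫ D.l.app E = lam ≫ D.T.map lam
  mu : E2.P ⟶ D.T.obj E
  mu_spec : ∃ w : E2.P ⟶ D.T.obj E2.P,
    w ≫ D.T.map E2.pr0 = E2.pr0 ≫ lam ∧
    w ≫ D.T.map E2.pr1 = E2.pr1 ≫ D.zero.app E ∧
    mu = w ≫ D.T.map addq
  muLift : ∀ {X : C} (f : X ⟶ D.T.obj E),
    f ≫ D.T.map q = f ≫ D.p.app E ≫ q ≫ D.zero.app M → (X ⟶ E2.P)
  muLift_mu : ∀ {X : C} (f : X ⟶ D.T.obj E)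
    (h : f ≫ D.T.map q = f ≫ D.p.app E ≫ q ≫ D.zero.app M),
    muLift f h ≫ mu = f
  muLift_q : ∀ {X : C} (f : X ⟶ D.T.obj E)
    (h : f ≫ D.T.map q = f ≫ D.p.app E ≫ q ≫ D.zero.app M),
    muLift f h ≫ E2.pr0 ≫ q = f ≫ D.p.app E ≫ q
  mu_mono : ∀ {X : C} (w w' : X ⟶ E2.P), w ≫ mu = w' ≫ mu → w = w'

/-- The bracketing operation `{f}` for a differential bundle. -/
noncomputable def DiffBundle.brk {D : TangentCat C} {E M : C} (B : DiffBundle D E M)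
    {X : C} (f : X ⟶ D.T.obj E) : X ⟶ E :=
  if h : f ≫ D.T.map B.q = f ≫ D.p.app E ≫ B.q ≫ D.zero.app M
  then B.muLift f h ≫ B.E2.pr0 else f ≫ D.p.app E

/-- Negatives for a differential bundle (the fibrewise group structure). -/
structure BundleNegatives {D : TangentCat C} {E M : C} (B : DiffBundle D E M) where
  neg : E ⟶ E
  neg_q : neg ≫ B.q = B.q
  neg_add : ∀ {X : C} (f : X ⟶ E) (h : f ≫ B.q = (f ≫ neg) ≫ B.q),
    B.E2.pair f (f ≫ neg) h ≫ B.addq = f ≫ B.q ≫ B.zeroq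

/-- Fibrewise sum of maps into `E` for the bundle addition `+_q`. -/
noncomputable def DiffBundle.qadd {D : TangentCat C} {E M : C} (B : DiffBundle D E M)
    {X : C} (f g : X ⟶ E) : X ⟶ E :=
  if h : f ≫ B.q = g ≫ B.q then B.E2.pair f g h ≫ B.addq else f

/-- Fibrewise difference of maps into `E` for the bundle addition `+_q`. -/
noncomputable def DiffBundle.qsub {D : TangentCat C} {E M : C} (B : DiffBundle D E M)
    (NB : BundleNegatives B) {X : C} (f g : X ⟶ E) : X ⟶ E :=
  B.qadd f (g ≫ NB.neg)

/-- The horizontal descent `U = ⟨T(q), p⟩ : T(E) ⟶ T(M) ×_M E`. -/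
def TangentCat.hdesc (D : TangentCat C) {E M : C} (q : E ⟶ M)
    (P : ChosenPB (D.p.app M) q) : D.T.obj E ⟶ P.P :=
  P.pair (D.T.map q) (D.p.app E) (by simpa using D.p.naturality q)

/-- A vertical connection on the differential bundle with projection `q` and
lift `lam`: a retraction `K` of `lam` with `Kq = pq`, `Kλ = ℓT(K)` and
`Kλ = T(λ)cT(K)` (equivalently, `(K,p)` and `(K,q)` are linear bundle
morphisms). -/
def IsVerticalConnection (D : TangentCat C) {E M : C} (q : E ⟶ M)
    (lam : E ⟶ D.T.obj E) (K : D.T.obj E ⟶ E) : Prop :=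
  lam ≫ K = 𝟙 E ∧
  K ≫ q = D.p.app E ≫ q ∧
  K ≫ lam = D.l.app E ≫ D.T.map K ∧
  K ≫ lam = D.T.map lam ≫ D.c.app E ≫ D.T.map K

/-- Flatness of a vertical connection: `cT(K)K = T(K)K`. -/
def IsFlat (D : TangentCat C) {E : C} (K : D.T.obj E ⟶ E) : Prop :=
  D.c.app E ≫ D.T.map K ≫ K = D.T.map K ≫ K

/-- A horizontal connection on the differential bundle with projection `q`,
lift `lam` and horizontal pullback `P = T(M) ×_M E`: a section `H` of the
horizontal descent `U = ⟨T(q),p⟩` with `Hℓ = (ℓ×0)T(H)` and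
`HT(λ)c = (0×λ)T(H)` (equivalently, `(H,1)` is linear into `p_E` and into
`T(𝗊)`). -/
def IsHorizontalConnection (D : TangentCat C) {E M : C} (q : E ⟶ M)
    (lam : E ⟶ D.T.obj E) (P : ChosenPB (D.p.app M) q)
    (H : P.P ⟶ D.T.obj E) : Prop :=
  H ≫ D.T.map q = P.pr0 ∧
  H ≫ D.p.app E = P.pr1 ∧
  (∃ w : P.P ⟶ D.T.obj P.P,
    w ≫ D.T.map P.pr0 = P.pr0 ≫ D.l.app M ∧
    w ≫ D.T.map P.pr1 = P.pr1 ≫ D.zero.app E ∧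
    H ≫ D.l.app E = w ≫ D.T.map H) ∧
  (∃ w : P.P ⟶ D.T.obj P.P,
    w ≫ D.T.map P.pr0 = P.pr0 ≫ D.zero.app (D.T.obj M) ∧
    w ≫ D.T.map P.pr1 = P.pr1 ≫ lam ∧
    H ≫ D.T.map lam ≫ D.c.app E = w ≫ D.T.map H)

/-- A (full) connection, in unbundled form: a vertical connection `K` and a
horizontal connection `H` with `HK = π₁q0_q` and `⟨K,p⟩μ + UH = 1`. -/
noncomputable def IsConnectionPair (D : TangentCat C) {E M : C} (q : E ⟶ M)
    (lam : E ⟶ D.T.obj E) (EP : ChosenPB q q) (zeroq : M ⟶ E)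
    (mu : EP.P ⟶ D.T.obj E) (P : ChosenPB (D.p.app M) q)
    (K : D.T.obj E ⟶ E) (H : P.P ⟶ D.T.obj E) : Prop :=
  IsVerticalConnection D q lam K ∧
  IsHorizontalConnection D q lam P H ∧
  H ≫ K = P.pr1 ≫ q ≫ zeroq ∧
  ∃ R : D.T.obj E ⟶ EP.P, R ≫ EP.pr0 = K ∧ R ≫ EP.pr1 = D.p.app E ∧
    D.hadd (R ≫ mu) (D.hdesc q P ≫ H) = 𝟙 (D.T.obj E)

/-- A connection on a differential bundle. -/
noncomputable def IsConnection {D : TangentCat C} {E M : C} (B : DiffBundle D E M)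
    (K : D.T.obj E ⟶ E) (H : B.P.P ⟶ D.T.obj E) : Prop :=
  IsConnectionPair D B.q B.lam B.E2 B.zeroq B.mu B.P K H

/-- A Finsler connection on a differential bundle. -/
def IsFinslerConnection {D : TangentCat C} {E M : C} (B : DiffBundle D E M)
    (R : D.T.obj E ⟶ B.E2.P) : Prop :=
  B.mu ≫ R = 𝟙 B.E2.P ∧
  R ≫ B.E2.pr1 = D.p.app E ∧
  R ≫ B.E2.pr0 ≫ B.lam = D.T.map B.lam ≫ D.c.app E ≫ D.T.map (R ≫ B.E2.pr0) ∧
  D.l.app E ≫ D.T.map (R ≫ B.E2.pr0) = R ≫ B.E2.pr0 ≫ B.lam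

/-- The covariant derivative `∇_K(w,s) = wT(s)K`. -/
def nabla (D : TangentCat C) {E M : C} (K : D.T.obj E ⟶ E)
    (w : M ⟶ D.T.obj M) (s : M ⟶ E) : M ⟶ E :=
  w ≫ D.T.map s ≫ K

section Stmt9Helpers

lemma p_nat (D : TangentCat C) {X Y : C} (f : X ⟶ Y) :
    D.T.map f ≫ D.p.app Y = D.p.app X ≫ f := by
  simpa using D.p.naturality f

lemma zero_nat (D : TangentCat C) {X Y : C} (f : X ⟶ Y) :
    f ≫ D.zero.app Y = D.zero.app X ≫ D.T.map f := by
  simpa using D.zero.naturality f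

lemma zeroT_c (D : TangentCat C) (M : C) :
    D.zero.app (D.T.obj M) ≫ D.c.app M = D.T.map (D.zero.app M) := by
  rw [← D.c_zero M, Category.assoc, D.c_c, Category.comp_id]

variable {D : TangentCat C} {E M : C} (B : DiffBundle D E M)

lemma pair_addq_zero {X : C} (f g : X ⟶ E) (hg : g = f ≫ B.q ≫ B.zeroq)
    (h : f ≫ B.q = g ≫ B.q) : B.E2.pair f g h ≫ B.addq = f := by
  subst hg; exact B.addq_zero f h

lemma E2pair_id : B.E2.pair B.E2.pr0 B.E2.pr1 B.E2.comm = 𝟙 B.E2.P := by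
  apply B.E2.hom_ext
  · rw [B.E2.pair_pr0, Category.id_comp]
  · rw [B.E2.pair_pr1, Category.id_comp]

lemma mu_p : B.mu ≫ D.p.app E = B.E2.pr1 := by
  obtain ⟨w, hw0, hw1, hmu⟩ := B.mu_spec
  have h2 : (B.E2.pr1 ≫ B.q ≫ B.zeroq) ≫ B.q = B.E2.pr1 ≫ B.q := by
    simp [B.zeroq_q]
  have hwp : w ≫ D.p.app B.E2.P
      = B.E2.pair (B.E2.pr1 ≫ B.q ≫ B.zeroq) B.E2.pr1 h2 := by
    apply B.E2.hom_ext
    · rw [B.E2.pair_pr0, Category.assoc, ← p_nat D B.E2.pr0, ← Category.assoc, hw0,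
        Category.assoc, B.lam_p, ← Category.assoc, B.E2.comm, Category.assoc]
    · rw [B.E2.pair_pr1, Category.assoc, ← p_nat D B.E2.pr1, ← Category.assoc, hw1,
        Category.assoc, D.zero_p, Category.comp_id]
  rw [hmu, Category.assoc, p_nat D B.addq, ← Category.assoc, hwp, B.addq_comm]
  exact pair_addq_zero B _ _ rfl _

/-- `λ = ⟨1, q0⟩ μ`. -/
lemma lam_mu : ∃ s : E ⟶ B.E2.P, s ≫ B.E2.pr0 = 𝟙 E ∧ s ≫ B.mu = B.lam := by
  have h0 : 𝟙 E ≫ B.q = (B.q ≫ B.zeroq) ≫ B.q := by simp [B.zeroq_q]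
  refine ⟨B.E2.pair (𝟙 E) (B.q ≫ B.zeroq) h0, B.E2.pair_pr0 _ _ _, ?_⟩
  obtain ⟨w, hw0, hw1, hmu⟩ := B.mu_spec
  obtain ⟨w', hw'0, hw'1, hadd⟩ := B.lam_add1 (𝟙 E) (B.q ≫ B.zeroq) h0
  have hsw : B.E2.pair (𝟙 E) (B.q ≫ B.zeroq) h0 ≫ w = w' := by
    apply B.TE2.hom_ext
    · rw [Category.assoc, hw0, hw'0, ← Category.assoc, B.E2.pair_pr0]
    · rw [Category.assoc, hw1, hw'1, ← Category.assoc, B.E2.pair_pr1, Category.assoc,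
        Category.assoc, ← B.lam_zero2]
  have hsa : B.E2.pair (𝟙 E) (B.q ≫ B.zeroq) h0 ≫ B.addq = 𝟙 E :=
    pair_addq_zero B _ _ (Category.id_comp _).symm _
  rw [hmu, ← Category.assoc, hsw, ← hadd, ← Category.assoc, hsa]
  simp

lemma zero_K (K : D.T.obj E ⟶ E) (hK : IsVerticalConnection D B.q B.lam K) :
    D.zero.app E ≫ K = B.q ≫ B.zeroq := by
  obtain ⟨hK1, hK2, hK3, hK4⟩ := hK
  have e1 : D.zero.app E ≫ K ≫ B.lam
      = B.lam ≫ D.T.map (D.zero.app E) ≫ D.T.map K := by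
    rw [hK4, ← Category.assoc, ← zero_nat D B.lam, Category.assoc,
      reassoc_of% (zeroT_c D E)]
  have e2 : D.zero.app E ≫ K ≫ B.lam
      = D.zero.app E ≫ D.T.map (D.zero.app E) ≫ D.T.map K := by
    rw [hK3, reassoc_of% (D.l_zero E)]
  have e3 := congrArg (fun t => t ≫ D.p.app E) (e1.symm.trans e2)
  simp only [Category.assoc] at e3
  rw [p_nat D K, ← Category.assoc (D.T.map (D.zero.app E)),
    p_nat D (D.zero.app E)] at e3
  simp only [Category.assoc, Functor.id_obj] at e3
  rw [reassoc_of% B.lam_p, reassoc_of% (D.zero_p E)] at e3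
  -- e3 : q ≫ zeroq ≫ 0 ≫ K = 0 ≫ K
  rw [← e3, ← reassoc_of% B.lam_zero2, hK1]
  simp

lemma mu_K (K : D.T.obj E ⟶ E) (hK : IsVerticalConnection D B.q B.lam K) :
    B.mu ≫ K = B.E2.pr0 := by
  obtain ⟨hK1, hK2, hK3, hK4⟩ := hK
  have hzK : D.zero.app E ≫ K = B.q ≫ B.zeroq := zero_K B K ⟨hK1, hK2, hK3, hK4⟩
  obtain ⟨w, hw0, hw1, hmu⟩ := B.mu_spec
  have hh : (B.E2.pr0 ≫ B.lam) ≫ D.p.app E = (B.E2.pr1 ≫ B.lam) ≫ D.p.app E := by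
    simp only [Category.assoc, B.lam_p]
    rw [← Category.assoc, B.E2.comm, Category.assoc]
  set g := (D.T2 E).pair (B.E2.pr0 ≫ B.lam) (B.E2.pr1 ≫ B.lam) hh with hgdef
  have hstep1 : B.addq ≫ B.lam = g ≫ D.add E := by
    have h := B.lam_add2 B.E2.pr0 B.E2.pr1 B.E2.comm hh
    rwa [E2pair_id, Category.id_comp] at h
  set u := B.E2.pr0 ≫ B.lam ≫ D.T.map B.lam with hudef
  set v := B.E2.pr1 ≫ B.lam ≫ D.zero.app (D.T.obj E) with hvdef
  have hupv : u ≫ D.T.map (D.p.app E)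
      = B.E2.pr0 ≫ B.q ≫ B.zeroq ≫ D.zero.app E := by
    rw [hudef]
    simp only [Category.assoc]
    rw [← D.T.map_comp, B.lam_p, D.T.map_comp, reassoc_of% B.lam_Tq,
      ← zero_nat D B.zeroq]
  have hvpv : v ≫ D.T.map (D.p.app E)
      = B.E2.pr1 ≫ B.q ≫ B.zeroq ≫ D.zero.app E := by
    have zp : D.p.app E ≫ D.zero.app E
        = D.zero.app (D.T.obj E) ≫ D.T.map (D.p.app E) := zero_nat D (D.p.app E)
    rw [hvdef]
    simp only [Category.assoc]
    rw [← zp, reassoc_of% B.lam_p]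
  have huv : u ≫ D.T.map (D.p.app E) = v ≫ D.T.map (D.p.app E) := by
    rw [hupv, hvpv, ← Category.assoc, B.E2.comm, Category.assoc]
  have hc' : (u ≫ D.c.app E) ≫ D.p.app (D.T.obj E)
      = (v ≫ D.c.app E) ≫ D.p.app (D.T.obj E) := by
    simp only [Category.assoc, D.c_p]
    simpa only [Category.assoc] using huv
  have hw2_0 : (w ≫ D.T.map g) ≫ D.T.map (D.T2 E).pr0 = u := by
    rw [Category.assoc, ← D.T.map_comp, hgdef, (D.T2 E).pair_pr0, D.T.map_comp,
      ← Category.assoc, hw0, Category.assoc, hudef]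
  have hw2_1 : (w ≫ D.T.map g) ≫ D.T.map (D.T2 E).pr1 = v := by
    rw [Category.assoc, ← D.T.map_comp, hgdef, (D.T2 E).pair_pr1, D.T.map_comp,
      ← Category.assoc, hw1, Category.assoc, ← zero_nat D B.lam, hvdef]
  obtain ⟨w3, h30, h31, h3⟩ := D.c_add E u v huv hc'
  have hw3 : w ≫ D.T.map g = w3 := by
    apply (D.T2T E).hom_ext
    · exact hw2_0.trans h30.symm
    · exact hw2_1.trans h31.symm
  have h5 : ((u ≫ D.c.app E) ≫ D.T.map K) ≫ D.p.app E
      = ((v ≫ D.c.app E) ≫ D.T.map K) ≫ D.p.app E := by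
    simp only [Category.assoc, p_nat D K]
    simpa only [Category.assoc] using congrArg (fun t => t ≫ K) hc'
  have hu' : (u ≫ D.c.app E) ≫ D.T.map K = B.E2.pr0 ≫ B.lam := by
    rw [hudef]
    simp only [Category.assoc]
    rw [← hK4, reassoc_of% hK1]
  have hv' : (v ≫ D.c.app E) ≫ D.T.map K
      = B.E2.pr1 ≫ B.q ≫ B.zeroq ≫ D.zero.app E := by
    rw [hvdef]
    simp only [Category.assoc]
    rw [reassoc_of% (zeroT_c D E), ← D.T.map_comp, hzK, D.T.map_comp,
      reassoc_of% B.lam_Tq, ← zero_nat D B.zeroq]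
  have hmain : B.mu ≫ K ≫ B.lam = B.E2.pr0 ≫ B.lam := by
    calc B.mu ≫ K ≫ B.lam
        = w ≫ D.T.map B.addq ≫ D.T.map B.lam ≫ D.c.app E ≫ D.T.map K := by
          rw [hmu, hK4]; simp only [Category.assoc]
      _ = w ≫ D.T.map g ≫ D.T.map (D.add E) ≫ D.c.app E ≫ D.T.map K := by
          rw [← Category.assoc (D.T.map B.addq), ← D.T.map_comp, hstep1, D.T.map_comp]
          simp only [Category.assoc]
      _ = w3 ≫ D.T.map (D.add E) ≫ D.c.app E ≫ D.T.map K := by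
          rw [← Category.assoc, hw3]
      _ = (D.T2 (D.T.obj E)).pair (u ≫ D.c.app E) (v ≫ D.c.app E) hc'
            ≫ D.add (D.T.obj E) ≫ D.T.map K := by
          rw [reassoc_of% h3]
      _ = (D.T2 E).pair ((u ≫ D.c.app E) ≫ D.T.map K) ((v ≫ D.c.app E) ≫ D.T.map K) h5
            ≫ D.add E := by
          rw [D.add_nat K _ _ hc' h5]
      _ = B.E2.pr0 ≫ B.lam := by
          have h7 : (B.E2.pr0 ≫ B.lam) ≫ D.p.app E
              = ((B.E2.pr0 ≫ B.lam) ≫ D.p.app E ≫ D.zero.app E) ≫ D.p.app E := by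
            simp only [Category.assoc, Functor.id_obj, D.zero_p, Category.comp_id]
          have hpair : (D.T2 E).pair ((u ≫ D.c.app E) ≫ D.T.map K)
                ((v ≫ D.c.app E) ≫ D.T.map K) h5
              = (D.T2 E).pair (B.E2.pr0 ≫ B.lam)
                ((B.E2.pr0 ≫ B.lam) ≫ D.p.app E ≫ D.zero.app E) h7 := by
            apply (D.T2 E).hom_ext
            · rw [(D.T2 E).pair_pr0, (D.T2 E).pair_pr0, hu']
            · rw [(D.T2 E).pair_pr1, (D.T2 E).pair_pr1, hv', Category.assoc,
                reassoc_of% B.lam_p, ← Category.assoc, ← B.E2.comm, Category.assoc]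
          rw [hpair, D.add_zero' E (B.E2.pr0 ≫ B.lam) h7]
  have h := congrArg (fun t => t ≫ K) hmain
  simp only [Category.assoc, hK1, Category.comp_id] at h
  exact h

end Stmt9Helpers

/-- For a differential bundle `𝗊`, to have a Finsler
connection is precisely to have a vertical connection: if `R` is a Finsler
connection then `Rπ₀` is a vertical connection; if `K` is a vertical connection
then `⟨K, p⟩` is a Finsler connection; and these constructions are mutually
inverse (in particular `⟨Rπ₀, p⟩ = R`, and trivially `⟨K,p⟩π₀ = K`). -/
theorem stmt9 (D : TangentCat C) {E M : C} (B : DiffBundle D E M) :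
    (∀ R : D.T.obj E ⟶ B.E2.P, IsFinslerConnection B R →
      IsVerticalConnection D B.q B.lam (R ≫ B.E2.pr0)) ∧
    (∀ K : D.T.obj E ⟶ E, IsVerticalConnection D B.q B.lam K →
      ∀ R : D.T.obj E ⟶ B.E2.P, R ≫ B.E2.pr0 = K → R ≫ B.E2.pr1 = D.p.app E →
        IsFinslerConnection B R) ∧
    (∀ R : D.T.obj E ⟶ B.E2.P, IsFinslerConnection B R →
      ∀ R' : D.T.obj E ⟶ B.E2.P, R' ≫ B.E2.pr0 = R ≫ B.E2.pr0 →
        R' ≫ B.E2.pr1 = D.p.app E → R' = R) := by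
  refine ⟨?_, ?_, ?_⟩
  · rintro R ⟨hF1, hF2, hF3, hF4⟩
    refine ⟨?_, ?_, ?_, ?_⟩
    · obtain ⟨s, hs0, hsmu⟩ := lam_mu B
      have hlr : B.lam ≫ R = s := by
        rw [← hsmu, Category.assoc, hF1, Category.comp_id]
      rw [← Category.assoc, hlr, hs0]
    · rw [Category.assoc, B.E2.comm, ← Category.assoc, hF2]
    · rw [Category.assoc]; exact hF4.symm
    · rw [Category.assoc]; exact hF3
  · rintro K ⟨hK1, hK2, hK3, hK4⟩ R hR0 hR1
    refine ⟨?_, hR1, ?_, ?_⟩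
    · apply B.E2.hom_ext
      · rw [Category.assoc, hR0, mu_K B K ⟨hK1, hK2, hK3, hK4⟩, Category.id_comp]
      · rw [Category.assoc, hR1, mu_p B, Category.id_comp]
    · rw [← Category.assoc, hR0]; exact hK4
    · rw [hR0, ← Category.assoc, hR0]; exact hK3.symm
  · rintro R ⟨hF1, hF2, hF3, hF4⟩ R' h0' h1'
    apply B.E2.hom_ext
    · exact h0'
    · rw [h1', hF2]
end

section
/- If H is a horizontal connection on a differential bundle 𝗊, then (c × 1)T(H)c : T²(M) ×_{T(M)} T(E) → T²(E) is a horizontal connection on the differential bundle T(𝗊). -/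
open CategoryTheory CategoryTheory.Limits

open scoped Classical

universe v u

variable {C : Type u} [Category.{v} C]

/-- If `H` is a horizontal connection on a differential
bundle `𝗊`, then `(c × 1)T(H)c : T²(M) ×_{T(M)} T(E) → T²(E)` is a horizontal
connection on the differential bundle `T(𝗊)`.  Here `P'` is the chosen
pullback `T²(M) ×_{T(M)} T(E)` of `p_{T(M)}` along `T(q)` (preserved by `T`),
and `W` is the map `c × 1 : P' → T(T(M) ×_M E)`. -/
theorem stmt10 (D : TangentCat C) {E M : C} (B : DiffBundle D E M)
    (H : B.P.P ⟶ D.T.obj E) (hH : IsHorizontalConnection D B.q B.lam B.P H)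
    (P' : ChosenPB (D.p.app (D.T.obj M)) (D.T.map B.q)) (TP' : PBLift D.T P')
    (W : P'.P ⟶ D.T.obj B.P.P)
    (hW0 : W ≫ D.T.map B.P.pr0 = P'.pr0 ≫ D.c.app M)
    (hW1 : W ≫ D.T.map B.P.pr1 = P'.pr1) :
    IsHorizontalConnection D (D.T.map B.q) (D.T.map B.lam ≫ D.c.app E) P'
      (W ≫ D.T.map H ≫ D.c.app E) := by
  obtain ⟨hTq, hp, ⟨w3, hw30, hw31, hw3⟩, ⟨w4, hw40, hw41, hw4⟩⟩ := hH
  -- naturality of c (in the form with T.map (T.map f))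
  have nc : ∀ {X Y : C} (f : X ⟶ Y),
      D.c.app X ≫ D.T.map (D.T.map f) = D.T.map (D.T.map f) ≫ D.c.app Y := by
    intro X Y f; simpa using (D.c.naturality f).symm
  -- naturality of zero
  have nz : ∀ {X Y : C} (f : X ⟶ Y),
      f ≫ D.zero.app Y = D.zero.app X ≫ D.T.map f := by
    intro X Y f; simpa using D.zero.naturality f
  -- c ≫ T(ℓ) ≫ c = ℓ_T ≫ T(c)
  have key3' : ∀ X : C, D.c.app X ≫ D.T.map (D.l.app X) ≫ D.c.app (D.T.obj X)
      = D.l.app (D.T.obj X) ≫ D.T.map (D.c.app X) := by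
    intro X
    rw [← Category.assoc, ← D.l_T_c X]
    simp only [Category.assoc]
    rw [D.c_c (D.T.obj X)]
    simp
  -- c ≫ ℓ_T = T(ℓ) ≫ c_T ≫ T(c)
  have key3 : ∀ X : C, D.c.app X ≫ D.l.app (D.T.obj X)
      = D.T.map (D.l.app X) ≫ D.c.app (D.T.obj X) ≫ D.T.map (D.c.app X) := by
    intro X
    have h2 : D.c.app X ≫ D.T.map (D.l.app X) ≫ D.c.app (D.T.obj X)
          ≫ D.T.map (D.c.app X) = D.l.app (D.T.obj X) := by
      slice_lhs 1 3 => rw [key3' X]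
      slice_lhs 2 3 => rw [← D.T.map_comp, D.c_c X]
      simp
    rw [← h2]
    slice_lhs 1 2 => rw [D.c_c X]
    simp
  refine ⟨?_, ?_, ?_, ?_⟩
  · -- (W T(H) c) T²(q) = pr0'
    slice_lhs 3 4 => rw [nc B.q]
    slice_lhs 2 3 => rw [← D.T.map_comp, hTq]
    slice_lhs 1 2 => rw [hW0]
    slice_lhs 2 3 => rw [D.c_c M]
    simp
  · -- (W T(H) c) p = pr1'
    slice_lhs 3 4 => rw [D.c_p E]
    slice_lhs 2 3 => rw [← D.T.map_comp, hp]
    slice_lhs 1 2 => rw [hW1]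
  · -- lift condition for ℓ
    have hu : (P'.pr0 ≫ D.l.app (D.T.obj M)) ≫ D.T.map (D.p.app (D.T.obj M))
        = (P'.pr1 ≫ D.zero.app (D.T.obj E)) ≫ D.T.map (D.T.map B.q) := by
      slice_lhs 2 3 => rw [D.l_Tp (D.T.obj M)]
      slice_rhs 2 3 => rw [← nz (D.T.map B.q)]
      slice_rhs 1 2 => rw [← P'.comm]
      simp
    refine ⟨TP'.pair _ _ hu, TP'.pair_pr0 _ _ hu, TP'.pair_pr1 _ _ hu, ?_⟩
    have key : W ≫ D.T.map w3 ≫ D.c.app B.P.P = TP'.pair _ _ hu ≫ D.T.map W := by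
      apply (B.TPn 2).hom_ext
      · show (W ≫ D.T.map w3 ≫ D.c.app B.P.P) ≫ D.T.map (D.T.map B.P.pr0)
          = (TP'.pair _ _ hu ≫ D.T.map W) ≫ D.T.map (D.T.map B.P.pr0)
        slice_lhs 3 4 => rw [nc B.P.pr0]
        slice_lhs 2 3 => rw [← D.T.map_comp, hw30, D.T.map_comp]
        slice_lhs 1 2 => rw [hW0]
        slice_lhs 2 4 => rw [key3' M]
        slice_rhs 2 3 => rw [← D.T.map_comp, hW0, D.T.map_comp]
        slice_rhs 1 2 => rw [TP'.pair_pr0 _ _ hu]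
        simp
      · show (W ≫ D.T.map w3 ≫ D.c.app B.P.P) ≫ D.T.map (D.T.map B.P.pr1)
          = (TP'.pair _ _ hu ≫ D.T.map W) ≫ D.T.map (D.T.map B.P.pr1)
        slice_lhs 3 4 => rw [nc B.P.pr1]
        slice_lhs 2 3 => rw [← D.T.map_comp, hw31, D.T.map_comp]
        slice_lhs 1 2 => rw [hW1]
        slice_lhs 2 3 => rw [D.c_zero E]
        slice_rhs 2 3 => rw [← D.T.map_comp, hW1]
        slice_rhs 1 2 => rw [TP'.pair_pr1 _ _ hu]
    simp only [D.T.map_comp, Category.assoc]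
    slice_lhs 3 4 => rw [key3 E]
    slice_lhs 2 3 => rw [← D.T.map_comp, hw3, D.T.map_comp]
    slice_lhs 3 4 => rw [← nc H]
    simp only [Category.assoc]
    rw [reassoc_of% key]
  · -- lift condition for T(λ)c
    have hu : (P'.pr0 ≫ D.zero.app (D.T.obj (D.T.obj M)))
          ≫ D.T.map (D.p.app (D.T.obj M))
        = (P'.pr1 ≫ D.T.map B.lam ≫ D.c.app E) ≫ D.T.map (D.T.map B.q) := by
      slice_lhs 2 3 => rw [← nz (D.p.app (D.T.obj M))]
      slice_rhs 3 4 => rw [nc B.q]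
      slice_rhs 2 3 => rw [← D.T.map_comp, B.lam_Tq, D.T.map_comp]
      slice_rhs 3 4 => rw [D.c_zero M]
      slice_rhs 1 2 => rw [← P'.comm]
      simp
    refine ⟨TP'.pair _ _ hu, TP'.pair_pr0 _ _ hu, TP'.pair_pr1 _ _ hu, ?_⟩
    have key : W ≫ D.T.map w4 ≫ D.c.app B.P.P = TP'.pair _ _ hu ≫ D.T.map W := by
      apply (B.TPn 2).hom_ext
      · show (W ≫ D.T.map w4 ≫ D.c.app B.P.P) ≫ D.T.map (D.T.map B.P.pr0)
          = (TP'.pair _ _ hu ≫ D.T.map W) ≫ D.T.map (D.T.map B.P.pr0)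
        slice_lhs 3 4 => rw [nc B.P.pr0]
        slice_lhs 2 3 => rw [← D.T.map_comp, hw40, D.T.map_comp]
        slice_lhs 1 2 => rw [hW0]
        slice_lhs 3 4 => rw [D.c_zero (D.T.obj M)]
        have nzc : D.c.app M ≫ D.zero.app (D.T.obj (D.T.obj M))
            = D.zero.app (D.T.obj (D.T.obj M)) ≫ D.T.map (D.c.app M) := nz (D.c.app M)
        slice_lhs 2 3 => rw [nzc]
        slice_rhs 2 3 => rw [← D.T.map_comp, hW0, D.T.map_comp]
        slice_rhs 1 2 => rw [TP'.pair_pr0 _ _ hu]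
        simp
      · show (W ≫ D.T.map w4 ≫ D.c.app B.P.P) ≫ D.T.map (D.T.map B.P.pr1)
          = (TP'.pair _ _ hu ≫ D.T.map W) ≫ D.T.map (D.T.map B.P.pr1)
        slice_lhs 3 4 => rw [nc B.P.pr1]
        slice_lhs 2 3 => rw [← D.T.map_comp, hw41, D.T.map_comp]
        slice_lhs 1 2 => rw [hW1]
        slice_rhs 2 3 => rw [← D.T.map_comp, hW1]
        slice_rhs 1 2 => rw [TP'.pair_pr1 _ _ hu]
        simp
    simp only [D.T.map_comp, Category.assoc]
    slice_lhs 3 4 => rw [nc B.lam]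
    slice_lhs 4 6 => rw [D.c_T_c E]
    slice_lhs 2 4 => rw [← D.T.map_comp, ← D.T.map_comp, hw4,
      D.T.map_comp]
    slice_lhs 3 4 => rw [← nc H]
    simp only [Category.assoc]
    rw [reassoc_of% key]
end

section
/- In a Cartesian tangent category, every differential object A has a canonical connection (K, H) on the differential bundle A over 1, where K = p̂ : T(A) → A is the principal projection and H = π₁0 : 1 × A → T(A) (identifying T(1) ×₁ A with 1 × A). -/
open CategoryTheory CategoryTheory.Limits

open scoped Classical

universe v u

variable {C : Type u} [Category.{v} C]

/-- In a Cartesian tangent category, every differential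
object `A` (a differential bundle over the terminal object `1`) has a
canonical connection `(K,H)` with `K = p̂` the principal projection
(characterized by `⟨p̂,p⟩` being inverse to `μ`) and `H = π₁0`. -/
theorem stmt12 (D : TangentCat C) {A One : C} (hOne : IsTerminal One)
    (B : DiffBundle D A One)
    (phat : D.T.obj A ⟶ A) (R : D.T.obj A ⟶ B.E2.P)
    (hR0 : R ≫ B.E2.pr0 = phat) (hR1 : R ≫ B.E2.pr1 = D.p.app A)
    (hinv1 : R ≫ B.mu = 𝟙 (D.T.obj A)) (hinv2 : B.mu ≫ R = 𝟙 B.E2.P) :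
    IsConnection B phat (B.P.pr1 ≫ D.zero.app A) := by
  obtain ⟨w, hw0, hw1, hwm⟩ := B.mu_spec
  -- mu is an isomorphism with inverse R
  have hcancel : ∀ {X : C} (f g : D.T.obj A ⟶ X), B.mu ≫ f = B.mu ≫ g → f = g := by
    intro X f g h
    calc f = (R ≫ B.mu) ≫ f := by rw [hinv1, Category.id_comp]
    _ = R ≫ B.mu ≫ g := by rw [Category.assoc, h]
    _ = g := by rw [← Category.assoc, hinv1, Category.id_comp]
  have hmuphat : B.mu ≫ phat = B.E2.pr0 := by
    rw [← hR0, ← Category.assoc, hinv2, Category.id_comp]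
  have hmuphatr : ∀ {Z : C} (k : A ⟶ Z), B.mu ≫ phat ≫ k = B.E2.pr0 ≫ k := by
    intro Z k; rw [← Category.assoc, hmuphat]
  -- reassociated forms of the basic facts
  have hw0r : ∀ {Z : C} (k : D.T.obj A ⟶ Z),
      w ≫ D.T.map B.E2.pr0 ≫ k = B.E2.pr0 ≫ B.lam ≫ k := by
    intro Z k; rw [← Category.assoc, hw0, Category.assoc]
  have hw1r : ∀ {Z : C} (k : D.T.obj A ⟶ Z),
      w ≫ D.T.map B.E2.pr1 ≫ k = B.E2.pr1 ≫ D.zero.app A ≫ k := by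
    intro Z k; rw [← Category.assoc, hw1, Category.assoc]
  have hTw0r : ∀ {Z : C} (k : D.T.obj (D.T.obj A) ⟶ Z),
      D.T.map w ≫ D.T.map (D.T.map B.E2.pr0) ≫ k = D.T.map B.E2.pr0 ≫ D.T.map B.lam ≫ k := by
    intro Z k
    rw [← Category.assoc, ← D.T.map_comp, hw0, D.T.map_comp, Category.assoc]
  have hTw1r : ∀ {Z : C} (k : D.T.obj (D.T.obj A) ⟶ Z),
      D.T.map w ≫ D.T.map (D.T.map B.E2.pr1) ≫ k
        = D.T.map B.E2.pr1 ≫ D.T.map (D.zero.app A) ≫ k := by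
    intro Z k
    rw [← Category.assoc, ← D.T.map_comp, hw1, D.T.map_comp, Category.assoc]
  -- naturalities, reassociated
  have hznatr : ∀ {X Y : C} (f : X ⟶ Y) {Z : C} (k : D.T.obj Y ⟶ Z),
      f ≫ D.zero.app Y ≫ k = D.zero.app X ≫ D.T.map f ≫ k := by
    intro X Y f Z k
    have hn := D.zero.naturality f
    simp only [Functor.id_map] at hn
    rw [← Category.assoc, hn, Category.assoc]
  have hlnatr : ∀ {X Y : C} (f : X ⟶ Y) {Z : C} (k : D.T.obj (D.T.obj Y) ⟶ Z),
      D.T.map f ≫ D.l.app Y ≫ k = D.l.app X ≫ D.T.map (D.T.map f) ≫ k := by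
    intro X Y f Z k
    have hn := D.l.naturality f
    simp only [Functor.comp_map] at hn
    rw [← Category.assoc, hn, Category.assoc]
  have hcnatr : ∀ {X Y : C} (f : X ⟶ Y) {Z : C} (k : D.T.obj (D.T.obj Y) ⟶ Z),
      D.T.map (D.T.map f) ≫ D.c.app Y ≫ k = D.c.app X ≫ D.T.map (D.T.map f) ≫ k := by
    intro X Y f Z k
    have hn := D.c.naturality f
    simp only [Functor.comp_map] at hn
    rw [← Category.assoc, hn, Category.assoc]
  -- T(q) factors through zero
  have hTq : D.T.map B.q = phat ≫ B.q ≫ D.zero.app One := by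
    have h1 : B.mu ≫ D.T.map B.q = B.E2.pr0 ≫ B.q ≫ D.zero.app One := by
      rw [hwm, Category.assoc, ← D.T.map_comp, B.addq_q, D.T.map_comp, ← Category.assoc, hw0,
        Category.assoc, B.lam_Tq]
    calc D.T.map B.q = (R ≫ B.mu) ≫ D.T.map B.q := by rw [hinv1, Category.id_comp]
    _ = R ≫ B.E2.pr0 ≫ B.q ≫ D.zero.app One := by rw [Category.assoc, h1]
    _ = phat ≫ B.q ≫ D.zero.app One := by rw [← Category.assoc, hR0]
  -- all maps into One agree
  have hOneExt : ∀ {X : C} (f g : X ⟶ One), f = g := fun f g => hOne.hom_ext f g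
  -- all maps into T(One) agree
  have hTOne : ∀ {X : C} (f g : X ⟶ D.T.obj One), f = g := by
    have key : ∀ {X : C} (f : X ⟶ D.T.obj One),
        f = (f ≫ D.T.map B.zeroq ≫ phat ≫ B.q) ≫ D.zero.app One := by
      intro X f
      conv_lhs => rw [show f = f ≫ D.T.map B.zeroq ≫ D.T.map B.q by
        rw [← D.T.map_comp, B.zeroq_q, D.T.map_id, Category.comp_id]]
      rw [hTq]
      simp only [Category.assoc]
    intro X f g
    rw [key f, key g]
    congr 1
    exact hOneExt _ _
  -- pair 1 (q ≫ zeroq) ≫ mu = lam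
  have hs : (𝟙 A) ≫ B.q = (B.q ≫ B.zeroq) ≫ B.q := hOneExt _ _
  have haz : B.E2.pair (𝟙 A) (B.q ≫ B.zeroq) hs ≫ B.addq = 𝟙 A := by
    have h2 := B.addq_zero (𝟙 A) (hOneExt _ _)
    simpa using h2
  have hlamMu : B.E2.pair (𝟙 A) (B.q ≫ B.zeroq) hs ≫ B.mu = B.lam := by
    obtain ⟨v, hv0, hv1, hvm⟩ := B.lam_add1 (𝟙 A) (B.q ≫ B.zeroq) hs
    have hwv : B.E2.pair (𝟙 A) (B.q ≫ B.zeroq) hs ≫ w = v := by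
      apply B.TE2.hom_ext
      · rw [Category.assoc, hw0, ← Category.assoc, B.E2.pair_pr0, Category.id_comp, hv0,
          Category.id_comp]
      · rw [Category.assoc, hw1, ← Category.assoc, B.E2.pair_pr1, hv1, Category.assoc,
          Category.assoc, B.lam_zero2]
    calc B.E2.pair (𝟙 A) (B.q ≫ B.zeroq) hs ≫ B.mu
        = B.E2.pair (𝟙 A) (B.q ≫ B.zeroq) hs ≫ w ≫ D.T.map B.addq := by rw [hwm]
    _ = v ≫ D.T.map B.addq := by rw [← Category.assoc, hwv]
    _ = B.E2.pair (𝟙 A) (B.q ≫ B.zeroq) hs ≫ B.addq ≫ B.lam := hvm.symm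
    _ = B.lam := by rw [← Category.assoc, haz, Category.id_comp]
  have hlamphat : B.lam ≫ phat = 𝟙 A := by
    rw [← hlamMu, Category.assoc, hmuphat, B.E2.pair_pr0]
  -- pair (q ≫ zeroq) 1 ≫ mu = zero
  have hzs : (B.q ≫ B.zeroq) ≫ B.q = (𝟙 A) ≫ B.q := hOneExt _ _
  have hzMu : B.E2.pair (B.q ≫ B.zeroq) (𝟙 A) hzs ≫ B.mu = D.zero.app A := by
    have hwv : B.E2.pair (B.q ≫ B.zeroq) (𝟙 A) hzs ≫ w
        = B.E2.pair (B.q ≫ B.zeroq) (𝟙 A) hzs ≫ D.zero.app B.E2.P := by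
      apply B.TE2.hom_ext
      · simp only [Category.assoc]
        rw [hw0]
        have hn := D.zero.naturality B.E2.pr0
        simp only [Functor.id_map] at hn
        rw [← hn]
        simp only [← Category.assoc]
        rw [B.E2.pair_pr0]
        simp only [Category.assoc]
        rw [B.lam_zero2]
      · simp only [Category.assoc]
        rw [hw1]
        have hn := D.zero.naturality B.E2.pr1
        simp only [Functor.id_map] at hn
        rw [← hn]
    have hadd1 : B.E2.pair (B.q ≫ B.zeroq) (𝟙 A) hzs ≫ B.addq = 𝟙 A := by
      rw [B.addq_comm]
      exact haz
    calc B.E2.pair (B.q ≫ B.zeroq) (𝟙 A) hzs ≫ B.mu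
        = B.E2.pair (B.q ≫ B.zeroq) (𝟙 A) hzs ≫ w ≫ D.T.map B.addq := by rw [hwm]
    _ = B.E2.pair (B.q ≫ B.zeroq) (𝟙 A) hzs ≫ D.zero.app B.E2.P ≫ D.T.map B.addq := by
        rw [← Category.assoc, hwv, Category.assoc]
    _ = B.E2.pair (B.q ≫ B.zeroq) (𝟙 A) hzs ≫ B.addq ≫ D.zero.app A := by
        rw [show D.zero.app B.E2.P ≫ D.T.map B.addq = B.addq ≫ D.zero.app A from by
          have hn := D.zero.naturality B.addq
          simp only [Functor.id_map] at hn
          exact hn.symm]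
    _ = D.zero.app A := by rw [← Category.assoc, hadd1, Category.id_comp]
  have hzphat : D.zero.app A ≫ phat = B.q ≫ B.zeroq := by
    rw [← hzMu, Category.assoc, hmuphat, B.E2.pair_pr0]
  -- 0_{TA} ≫ c_A = T(0_A)
  have h0c : D.zero.app (D.T.obj A) ≫ D.c.app A = D.T.map (D.zero.app A) := by
    rw [← D.c_zero A, Category.assoc, D.c_c, Category.comp_id]
  have hTw0p : D.T.map w ≫ D.T.map (D.T.map B.E2.pr0) = D.T.map B.E2.pr0 ≫ D.T.map B.lam := by
    rw [← D.T.map_comp, hw0, D.T.map_comp]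
  have hTw1p : D.T.map w ≫ D.T.map (D.T.map B.E2.pr1)
      = D.T.map B.E2.pr1 ≫ D.T.map (D.zero.app A) := by
    rw [← D.T.map_comp, hw1, D.T.map_comp]
  -- Claim 1 : w ≫ l = w ≫ T(w)
  have hwl : w ≫ D.l.app B.E2.P = w ≫ D.T.map w := by
    apply (B.TE2n 2).hom_ext
    · show (w ≫ D.l.app B.E2.P) ≫ D.T.map (D.T.map B.E2.pr0)
        = (w ≫ D.T.map w) ≫ D.T.map (D.T.map B.E2.pr0)
      simp only [Category.assoc]
      rw [show D.l.app B.E2.P ≫ D.T.map (D.T.map B.E2.pr0)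
          = D.T.map B.E2.pr0 ≫ D.l.app A from by
        have hn := D.l.naturality B.E2.pr0
        simp only [Functor.comp_map] at hn
        exact hn.symm]
      rw [hw0r, B.lam_l, hTw0p, hw0r]
    · show (w ≫ D.l.app B.E2.P) ≫ D.T.map (D.T.map B.E2.pr1)
        = (w ≫ D.T.map w) ≫ D.T.map (D.T.map B.E2.pr1)
      simp only [Category.assoc]
      rw [show D.l.app B.E2.P ≫ D.T.map (D.T.map B.E2.pr1)
          = D.T.map B.E2.pr1 ≫ D.l.app A from by
        have hn := D.l.naturality B.E2.pr1
        simp only [Functor.comp_map] at hn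
        exact hn.symm]
      rw [hw1r, D.l_zero, hTw1p, hw1r]
  have hwlr : ∀ {Z : C} (k : D.T.obj (D.T.obj B.E2.P) ⟶ Z),
      w ≫ D.l.app B.E2.P ≫ k = w ≫ D.T.map w ≫ k := by
    intro Z k; rw [← Category.assoc, hwl, Category.assoc]
  -- helper : T(w) ≫ T(T(addq)) ≫ T(phat) = T(pr0)
  have hTmu : D.T.map w ≫ D.T.map (D.T.map B.addq) ≫ D.T.map phat = D.T.map B.E2.pr0 := by
    rw [← D.T.map_comp, ← D.T.map_comp]
    congr 1
    rw [← Category.assoc, ← hwm, hmuphat]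
  -- vertical linearity no.1 : phat ≫ lam = l ≫ T(phat)
  have hV3 : phat ≫ B.lam = D.l.app A ≫ D.T.map phat := by
    apply hcancel
    rw [hmuphatr]
    conv_rhs => rw [hwm]
    simp only [Category.assoc]
    rw [hlnatr B.addq, hwlr, hTmu, hw0]
  -- the map u with addq ≫ lam = u ≫ T(addq)
  obtain ⟨u, hu0, hu1, hum⟩ := B.lam_add1 B.E2.pr0 B.E2.pr1 B.E2.comm
  have hid : B.E2.pair B.E2.pr0 B.E2.pr1 B.E2.comm = 𝟙 B.E2.P := by
    apply B.E2.hom_ext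
    · rw [B.E2.pair_pr0, Category.id_comp]
    · rw [B.E2.pair_pr1, Category.id_comp]
  have haddlam : B.addq ≫ B.lam = u ≫ D.T.map B.addq := by
    rw [← hum, hid, Category.id_comp]
  have hu0r : ∀ {Z : C} (k : D.T.obj A ⟶ Z),
      u ≫ D.T.map B.E2.pr0 ≫ k = B.E2.pr0 ≫ B.lam ≫ k := by
    intro Z k; rw [← Category.assoc, hu0, Category.assoc]
  have hu1r : ∀ {Z : C} (k : D.T.obj A ⟶ Z),
      u ≫ D.T.map B.E2.pr1 ≫ k = B.E2.pr1 ≫ B.lam ≫ k := by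
    intro Z k; rw [← Category.assoc, hu1, Category.assoc]
  have hTu0r : ∀ {Z : C} (k : D.T.obj (D.T.obj A) ⟶ Z),
      D.T.map u ≫ D.T.map (D.T.map B.E2.pr0) ≫ k = D.T.map B.E2.pr0 ≫ D.T.map B.lam ≫ k := by
    intro Z k
    rw [← Category.assoc, ← D.T.map_comp, hu0, D.T.map_comp, Category.assoc]
  have hTu1r : ∀ {Z : C} (k : D.T.obj (D.T.obj A) ⟶ Z),
      D.T.map u ≫ D.T.map (D.T.map B.E2.pr1) ≫ k = D.T.map B.E2.pr1 ≫ D.T.map B.lam ≫ k := by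
    intro Z k
    rw [← Category.assoc, ← D.T.map_comp, hu1, D.T.map_comp, Category.assoc]
  have hlamc : B.lam ≫ D.T.map B.lam ≫ D.c.app A = B.lam ≫ D.T.map B.lam := by
    rw [← Category.assoc, ← B.lam_l, Category.assoc, D.l_c]
  -- Claim 2 : w ≫ T(u) ≫ c = u ≫ T(w)
  have hwu : w ≫ D.T.map u ≫ D.c.app B.E2.P = u ≫ D.T.map w := by
    apply (B.TE2n 2).hom_ext
    · show (w ≫ D.T.map u ≫ D.c.app B.E2.P) ≫ D.T.map (D.T.map B.E2.pr0)
        = (u ≫ D.T.map w) ≫ D.T.map (D.T.map B.E2.pr0)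
      simp only [Category.assoc]
      rw [show D.c.app B.E2.P ≫ D.T.map (D.T.map B.E2.pr0)
          = D.T.map (D.T.map B.E2.pr0) ≫ D.c.app A from by
        have hn := D.c.naturality B.E2.pr0
        simp only [Functor.comp_map] at hn
        exact hn.symm]
      rw [hTu0r, hw0r, hlamc, hTw0p, hu0r]
    · show (w ≫ D.T.map u ≫ D.c.app B.E2.P) ≫ D.T.map (D.T.map B.E2.pr1)
        = (u ≫ D.T.map w) ≫ D.T.map (D.T.map B.E2.pr1)
      simp only [Category.assoc]
      rw [show D.c.app B.E2.P ≫ D.T.map (D.T.map B.E2.pr1)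
          = D.T.map (D.T.map B.E2.pr1) ≫ D.c.app A from by
        have hn := D.c.naturality B.E2.pr1
        simp only [Functor.comp_map] at hn
        exact hn.symm]
      rw [hTu1r, hw1r, ← hznatr B.lam, h0c, hTw1p, hu1r]
  have hwur : ∀ {Z : C} (k : D.T.obj (D.T.obj B.E2.P) ⟶ Z),
      w ≫ D.T.map u ≫ D.c.app B.E2.P ≫ k = u ≫ D.T.map w ≫ k := by
    intro Z k
    rw [← Category.assoc, ← Category.assoc, Category.assoc w, hwu, Category.assoc]
  -- vertical linearity no.2 : phat ≫ lam = T(lam) ≫ c ≫ T(phat)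
  have hV4 : phat ≫ B.lam = D.T.map B.lam ≫ D.c.app A ≫ D.T.map phat := by
    apply hcancel
    rw [hmuphatr]
    conv_rhs => rw [hwm]
    simp only [Category.assoc]
    rw [show ∀ (k : D.T.obj (D.T.obj A) ⟶ D.T.obj A),
        D.T.map B.addq ≫ D.T.map B.lam ≫ k = D.T.map u ≫ D.T.map (D.T.map B.addq) ≫ k from by
      intro k
      rw [← Category.assoc, ← D.T.map_comp, haddlam, D.T.map_comp, Category.assoc]]
    rw [hcnatr B.addq, hwur, hTmu, hu0]
  refine ⟨⟨hlamphat, hOneExt _ _, hV3, hV4⟩, ⟨?_, ?_, ?_, ?_⟩, ?_, R, hR0, hR1, ?_⟩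
  · exact hTOne _ _
  · rw [Category.assoc, D.zero_p, Category.comp_id]
  · refine ⟨B.TP.pair (B.P.pr0 ≫ D.l.app One) (B.P.pr1 ≫ D.zero.app A) (hTOne _ _),
      B.TP.pair_pr0 _ _ _, B.TP.pair_pr1 _ _ _, ?_⟩
    rw [D.T.map_comp, ← Category.assoc, B.TP.pair_pr1, Category.assoc, Category.assoc,
      D.l_zero]
  · refine ⟨B.TP.pair (B.P.pr0 ≫ D.zero.app (D.T.obj One)) (B.P.pr1 ≫ B.lam) (hTOne _ _),
      B.TP.pair_pr0 _ _ _, B.TP.pair_pr1 _ _ _, ?_⟩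
    rw [D.T.map_comp]
    simp only [Category.assoc]
    rw [← Category.assoc (B.TP.pair _ _ _), B.TP.pair_pr1, Category.assoc, ← hznatr B.lam, h0c]
  · rw [Category.assoc, hzphat]
  · rw [hinv1]
    have hdH : D.hdesc B.q B.P ≫ B.P.pr1 ≫ D.zero.app A = D.p.app A ≫ D.zero.app A := by
      rw [← Category.assoc, TangentCat.hdesc, B.P.pair_pr1]
    rw [hdH, TangentCat.hadd]
    have hcond : 𝟙 (D.T.obj A) ≫ D.p.app A = (D.p.app A ≫ D.zero.app A) ≫ D.p.app A := by
      rw [Category.id_comp, Category.assoc, D.zero_p]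
      simp
    rw [dif_pos hcond]
    have h2 := D.add_zero' A (𝟙 (D.T.obj A)) (by simpa using hcond)
    simpa using h2
end

section
/- If (K, H) is a connection on a differential bundle 𝗊, then (cT(K), (c × 1)T(H)c) is a connection on the differential bundle T(𝗊). -/
open CategoryTheory CategoryTheory.Limits

open scoped Classical

universe v u

variable {C : Type u} [Category.{v} C]

/-!
Everything about `T(𝗊)` comes from `𝗊` by applying `T` and conjugating with the canonical flip
`c`. The lift of `T(𝗊)` is `T(λ)c`, and on the second tangent level the lifts `ℓ`, `0` and
`T(λ)c` are `h ↦ cT(h)cT(c)` applied to their first-level versions (from `ℓT(c)c = cT(ℓ)`,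
`cT(c)c = T(c)cT(c)`, `T(0)c = 0` and `c² = 1`). So each axiom of `(K, H)`, after applying `T`,
becomes the corresponding axiom of `(cT(K), (c × 1)T(H)c)`; for `H` the maps `ℓ × 0` and
`0 × λ` are moved along the isomorphism `c × 1`, whose inverse is `⟨T(π₀)c, T(π₁)⟩`. For the
decomposition of the identity, `c` carries the addition `T(+)` to `+` and intertwines the
horizontal descents, `cT(U) = U'(c × 1)`, so `c T(⟨K, p⟩μ + UH) c = ⟨cT(K), p⟩μ' + U'H'`.
-/

namespace TangentCat

variable (D : TangentCat C)

theorem c_c_assoc {A X : C} (f : D.T.obj (D.T.obj A) ⟶ X) :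
    D.c.app A ≫ D.c.app A ≫ f = f := by
  rw [← Category.assoc, D.c_c]; exact Category.id_comp f

theorem map_c_map_c (A : C) :
    D.T.map (D.c.app A) ≫ D.T.map (D.c.app A) = 𝟙 (D.T.obj (D.T.obj (D.T.obj A))) := by
  rw [← D.T.map_comp, D.c_c]; exact D.T.map_id _

theorem map_c_map_c_assoc {A X : C} (f : D.T.obj (D.T.obj (D.T.obj A)) ⟶ X) :
    D.T.map (D.c.app A) ≫ D.T.map (D.c.app A) ≫ f = f := by
  rw [← Category.assoc, D.map_c_map_c]; exact Category.id_comp f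

theorem c_nat {A B : C} (f : A ⟶ B) :
    D.T.map (D.T.map f) ≫ D.c.app B = D.c.app A ≫ D.T.map (D.T.map f) :=
  D.c.naturality f

theorem p_nat {A B : C} (f : A ⟶ B) : D.T.map f ≫ D.p.app B = D.p.app A ≫ f :=
  D.p.naturality f

theorem zero_nat {A B : C} (f : A ⟶ B) :
    f ≫ D.zero.app B = D.zero.app A ≫ D.T.map f :=
  D.zero.naturality f

theorem c_map_p (A : C) : D.c.app A ≫ D.T.map (D.p.app A) = D.p.app (D.T.obj A) := by
  rw [← D.c_p, D.c_c_assoc]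

def flipLift {A : C} (h : D.T.obj A ⟶ D.T.obj (D.T.obj A)) :
    D.T.obj (D.T.obj A) ⟶ D.T.obj (D.T.obj (D.T.obj A)) :=
  D.c.app A ≫ D.T.map h ≫ D.c.app (D.T.obj A) ≫ D.T.map (D.c.app A)

theorem l_app_T (A : C) : D.l.app (D.T.obj A) = D.flipLift (D.l.app A) := by
  rw [flipLift, ← reassoc_of% (D.l_T_c A), D.c_c_assoc, D.map_c_map_c]
  exact (Category.comp_id _).symm

theorem map_lift_comp_c {A : C} (f : A ⟶ D.T.obj A) :
    D.T.map (D.T.map f ≫ D.c.app A) ≫ D.c.app (D.T.obj A)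
      = D.flipLift (D.T.map f ≫ D.c.app A) := by
  simp only [flipLift, Functor.map_comp, Category.assoc]
  rw [← D.c_T_c, ← reassoc_of% (D.c_nat f), D.c_c_assoc]

theorem zero_app_T (A : C) :
    D.zero.app (D.T.obj (D.T.obj A)) = D.flipLift (D.zero.app (D.T.obj A)) := by
  rw [flipLift, reassoc_of% (D.c_zero (D.T.obj A)), ← D.zero_nat, D.c_c_assoc]

theorem c_map_comp_map_c_eq_flipLift_comp {E : C} {K : D.T.obj E ⟶ E} {lam : E ⟶ D.T.obj E}
    {h : D.T.obj E ⟶ D.T.obj (D.T.obj E)} (hK : K ≫ lam = h ≫ D.T.map K) :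
    (D.c.app E ≫ D.T.map K) ≫ D.T.map lam ≫ D.c.app E
      = D.flipLift h ≫ D.T.map (D.c.app E ≫ D.T.map K) := by
  simp only [flipLift, Category.assoc, Functor.map_comp, D.map_c_map_c_assoc]
  rw [← D.T.map_comp_assoc, hK, Functor.map_comp_assoc, D.c_nat]

theorem comp_map_hadd_comp_c {X Y A : C} (k : Y ⟶ D.T.obj X) {f g : X ⟶ D.T.obj A}
    (h : f ≫ D.p.app A = g ≫ D.p.app A) :
    k ≫ D.T.map (D.hadd f g) ≫ D.c.app A
      = D.hadd (k ≫ D.T.map f ≫ D.c.app A) (k ≫ D.T.map g ≫ D.c.app A) := by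
  have hT : (k ≫ D.T.map f) ≫ D.T.map (D.p.app A)
      = (k ≫ D.T.map g) ≫ D.T.map (D.p.app A) := by
    rw [Category.assoc, Category.assoc, ← D.T.map_comp, h, D.T.map_comp]
  have hc : ((k ≫ D.T.map f) ≫ D.c.app A) ≫ D.p.app (D.T.obj A)
      = ((k ≫ D.T.map g) ≫ D.c.app A) ≫ D.p.app (D.T.obj A) := by
    rwa [Category.assoc _ (D.c.app A), Category.assoc _ (D.c.app A), D.c_p]
  obtain ⟨w, hw0, hw1, hwadd⟩ := D.c_add A _ _ hT hc
  have hw : w = k ≫ D.T.map ((D.T2 A).pair f g h) := by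
    apply (D.T2T A).hom_ext
    · rw [hw0, Category.assoc, ← D.T.map_comp, (D.T2 A).pair_pr0]
    · rw [hw1, Category.assoc, ← D.T.map_comp, (D.T2 A).pair_pr1]
  have hc' : (k ≫ D.T.map f ≫ D.c.app A) ≫ D.p.app (D.T.obj A)
      = (k ≫ D.T.map g ≫ D.c.app A) ≫ D.p.app (D.T.obj A) := by
    simpa only [Category.assoc] using hc
  simp only [Category.assoc] at hwadd
  rw [hadd, hadd, dif_pos h, dif_pos hc', ← hwadd, hw, D.T.map_comp, Category.assoc,
    Category.assoc]

end TangentCat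

theorem IsVerticalConnection.tangent {D : TangentCat C} {E M : C} {q : E ⟶ M}
    {lam : E ⟶ D.T.obj E} {K : D.T.obj E ⟶ E} (hK : IsVerticalConnection D q lam K) :
    IsVerticalConnection D (D.T.map q) (D.T.map lam ≫ D.c.app E) (D.c.app E ≫ D.T.map K) := by
  obtain ⟨hlamK, hKq, hKl, hKc⟩ := hK
  refine ⟨?_, ?_, ?_, ?_⟩
  · rw [Category.assoc, D.c_c_assoc, ← D.T.map_comp, hlamK, D.T.map_id]
  · rw [Category.assoc, ← D.T.map_comp, hKq, D.T.map_comp, reassoc_of% (D.c_map_p E)]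
  · rw [D.c_map_comp_map_c_eq_flipLift_comp hKl, ← D.l_app_T]
  · rw [D.c_map_comp_map_c_eq_flipLift_comp (hKc.trans (Category.assoc _ _ _).symm),
      ← D.map_lift_comp_c, Category.assoc]

-- `w` plays the role of `a × b : P ⟶ T(P)`, which must be asked to exist since `T` is not
-- assumed to preserve `P`.
def IsLinearOnPullback (T : C ⥤ C) {A B Z X : C} {f : A ⟶ Z} {g : B ⟶ Z} (P : ChosenPB f g)
    (a : A ⟶ T.obj A) (b : B ⟶ T.obj B) (H : P.P ⟶ X) (h : X ⟶ T.obj X) : Prop :=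
  ∃ w : P.P ⟶ T.obj P.P,
    w ≫ T.map P.pr0 = P.pr0 ≫ a ∧ w ≫ T.map P.pr1 = P.pr1 ≫ b ∧ H ≫ h = w ≫ T.map H

section TangentPullback

variable {D : TangentCat C} {E M : C} {q : E ⟶ M} (P : ChosenPB (D.p.app M) q)
  (P' : ChosenPB (D.p.app (D.T.obj M)) (D.T.map q))

-- The inverse of `W = c × 1 : P' ⟶ T(P)`.
def ChosenPB.tangentFlip : D.T.obj P.P ⟶ P'.P :=
  P'.pair (D.T.map P.pr0 ≫ D.c.app M) (D.T.map P.pr1) (by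
    rw [Category.assoc, D.c_p, ← D.T.map_comp, P.comm, D.T.map_comp])

variable {P P'} {W : P'.P ⟶ D.T.obj P.P}

theorem ChosenPB.tangentFlip_comp (TP : PBLift D.T P)
    (hW0 : W ≫ D.T.map P.pr0 = P'.pr0 ≫ D.c.app M) (hW1 : W ≫ D.T.map P.pr1 = P'.pr1) :
    P.tangentFlip P' ≫ W = 𝟙 _ := by
  apply TP.hom_ext
  · rw [Category.assoc, hW0, tangentFlip, reassoc_of% (P'.pair_pr0 _ _ _), Category.assoc, D.c_c,
      Category.comp_id, Category.id_comp]
  · rw [Category.assoc, hW1, tangentFlip, P'.pair_pr1, Category.id_comp]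

theorem TangentCat.c_comp_map_hdesc (TP : PBLift D.T P)
    (hW0 : W ≫ D.T.map P.pr0 = P'.pr0 ≫ D.c.app M) (hW1 : W ≫ D.T.map P.pr1 = P'.pr1) :
    D.c.app E ≫ D.T.map (D.hdesc q P) = D.hdesc (D.T.map q) P' ≫ W := by
  apply TP.hom_ext
  · rw [Category.assoc, Category.assoc, hW0, ← D.T.map_comp, TangentCat.hdesc, TangentCat.hdesc,
      P.pair_pr0, reassoc_of% (P'.pair_pr0 _ _ _), D.c_nat]
  · rw [Category.assoc, Category.assoc, hW1, ← D.T.map_comp, TangentCat.hdesc, TangentCat.hdesc,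
      P.pair_pr1, P'.pair_pr1, D.c_map_p]

theorem IsLinearOnPullback.tangent (TP : PBLift D.T P)
    (hW0 : W ≫ D.T.map P.pr0 = P'.pr0 ≫ D.c.app M) (hW1 : W ≫ D.T.map P.pr1 = P'.pr1)
    {a : D.T.obj M ⟶ D.T.obj (D.T.obj M)} {b : E ⟶ D.T.obj E} {H : P.P ⟶ D.T.obj E}
    {h : D.T.obj E ⟶ D.T.obj (D.T.obj E)} (hH : IsLinearOnPullback D.T P a b H h) :
    IsLinearOnPullback D.T P' (D.flipLift a) (D.T.map b ≫ D.c.app E)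
      (W ≫ D.T.map H ≫ D.c.app E) (D.flipLift h) := by
  obtain ⟨w, hw0, hw1, hwH⟩ := hH
  refine ⟨W ≫ D.T.map w ≫ D.c.app P.P ≫ D.T.map (P.tangentFlip P'), ?_, ?_, ?_⟩
  · simp only [Category.assoc, ← D.T.map_comp, ChosenPB.tangentFlip, P'.pair_pr0]
    rw [D.T.map_comp, ← reassoc_of% (D.c_nat P.pr0), ← D.T.map_comp_assoc, hw0,
      D.T.map_comp_assoc, reassoc_of% hW0, TangentCat.flipLift]
  · simp only [Category.assoc, ← D.T.map_comp, ChosenPB.tangentFlip, P'.pair_pr1]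
    rw [← D.c_nat, ← D.T.map_comp_assoc, hw1, D.T.map_comp_assoc, reassoc_of% hW1]
  · calc (W ≫ D.T.map H ≫ D.c.app E) ≫ D.flipLift h
        = W ≫ D.T.map (H ≫ h) ≫ D.c.app (D.T.obj E) ≫ D.T.map (D.c.app E) := by
          simp only [TangentCat.flipLift, Category.assoc, Functor.map_comp, D.c_c_assoc]
      _ = W ≫ D.T.map w ≫ D.c.app P.P ≫ D.T.map (D.T.map H ≫ D.c.app E) := by
          rw [hwH, Functor.map_comp, Functor.map_comp, Category.assoc, reassoc_of% (D.c_nat H)]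
      _ = (W ≫ D.T.map w ≫ D.c.app P.P ≫ D.T.map (P.tangentFlip P'))
            ≫ D.T.map (W ≫ D.T.map H ≫ D.c.app E) := by
          rw [Category.assoc, Category.assoc, Category.assoc, ← D.T.map_comp,
            reassoc_of% (P.tangentFlip_comp TP hW0 hW1)]

theorem IsHorizontalConnection.tangent {lam : E ⟶ D.T.obj E} {H : P.P ⟶ D.T.obj E}
    (hH : IsHorizontalConnection D q lam P H) (TP : PBLift D.T P)
    (hW0 : W ≫ D.T.map P.pr0 = P'.pr0 ≫ D.c.app M) (hW1 : W ≫ D.T.map P.pr1 = P'.pr1) :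
    IsHorizontalConnection D (D.T.map q) (D.T.map lam ≫ D.c.app E) P'
      (W ≫ D.T.map H ≫ D.c.app E) := by
  obtain ⟨hHq, hHp, hHl, hHlam⟩ := hH
  have hl : IsLinearOnPullback D.T P (D.l.app M) (D.zero.app E) H (D.l.app E) := hHl
  have hlam : IsLinearOnPullback D.T P (D.zero.app (D.T.obj M)) lam H
      (D.T.map lam ≫ D.c.app E) := by
    simpa only [IsLinearOnPullback, Category.assoc] using hHlam
  refine ⟨?_, ?_, ?_, ?_⟩
  · rw [Category.assoc, Category.assoc, ← D.c_nat, ← D.T.map_comp_assoc, hHq, reassoc_of% hW0,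
      D.c_c]
    exact Category.comp_id _
  · rw [Category.assoc, Category.assoc, D.c_p, ← D.T.map_comp, hHp, hW1]
  · have := hl.tangent TP hW0 hW1
    rwa [← D.l_app_T, ← D.l_app_T, D.c_zero] at this
  · have := hlam.tangent TP hW0 hW1
    rw [← D.zero_app_T, ← D.map_lift_comp_c] at this
    simpa only [IsLinearOnPullback, Category.assoc] using this

end TangentPullback

namespace DiffBundle

variable {D : TangentCat C} {E M : C} (B : DiffBundle D E M)

theorem mu_p : B.mu ≫ D.p.app E = B.E2.pr1 := by
  obtain ⟨w, hw0, hw1, hmu⟩ := B.mu_spec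
  have hzero : (B.E2.pr1 ≫ B.q ≫ B.zeroq) ≫ B.q = B.E2.pr1 ≫ B.q := by
    rw [Category.assoc, Category.assoc, B.zeroq_q, Category.comp_id]
  have hwp : w ≫ D.p.app B.E2.P = B.E2.pair (B.E2.pr1 ≫ B.q ≫ B.zeroq) B.E2.pr1 hzero := by
    apply B.E2.hom_ext
    · rw [B.E2.pair_pr0, Category.assoc, ← D.p_nat, reassoc_of% hw0, B.lam_p,
        reassoc_of% B.E2.comm]
    · rw [B.E2.pair_pr1, Category.assoc, ← D.p_nat, reassoc_of% hw1, D.zero_p]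
      exact Category.comp_id _
  rw [hmu, Category.assoc, D.p_nat, reassoc_of% hwp, B.addq_comm]
  exact B.addq_zero _ _

theorem eq_map_mu_comp_c (mu' : D.T.obj B.E2.P ⟶ D.T.obj (D.T.obj E))
    (hmu' : ∃ w : D.T.obj B.E2.P ⟶ D.T.obj (D.T.obj B.E2.P),
      w ≫ D.T.map (D.T.map B.E2.pr0) = D.T.map B.E2.pr0 ≫ D.T.map B.lam ≫ D.c.app E ∧
      w ≫ D.T.map (D.T.map B.E2.pr1) = D.T.map B.E2.pr1 ≫ D.zero.app (D.T.obj E) ∧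
      mu' = w ≫ D.T.map (D.T.map B.addq)) :
    mu' = D.T.map B.mu ≫ D.c.app E := by
  obtain ⟨w', hw'0, hw'1, hmu'⟩ := hmu'
  obtain ⟨w, hw0, hw1, hmu⟩ := B.mu_spec
  have hw' : w' = D.T.map w ≫ D.c.app B.E2.P := by
    apply (B.TE2n 2).hom_ext
    · change w' ≫ D.T.map (D.T.map B.E2.pr0) = _ ≫ D.T.map (D.T.map B.E2.pr0)
      rw [hw'0, ← D.T.map_comp_assoc, ← hw0, D.T.map_comp_assoc, Category.assoc, D.c_nat]
    · change w' ≫ D.T.map (D.T.map B.E2.pr1) = _ ≫ D.T.map (D.T.map B.E2.pr1)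
      rw [hw'1, ← D.c_zero, ← D.T.map_comp_assoc, ← hw1, D.T.map_comp_assoc, Category.assoc,
        D.c_nat]
  rw [hmu', hw', hmu, D.T.map_comp, Category.assoc, Category.assoc, D.c_nat]

end DiffBundle

-- `W` is the map `c × 1`, and `mu'` is the map `μ` of the bundle `T(𝗊)`.
theorem stmt13_general (D : TangentCat C) {E M : C} (B : DiffBundle D E M)
    (K : D.T.obj E ⟶ E) (H : B.P.P ⟶ D.T.obj E) (hconn : IsConnection B K H)
    (P' : ChosenPB (D.p.app (D.T.obj M)) (D.T.map B.q))
    (mu' : D.T.obj B.E2.P ⟶ D.T.obj (D.T.obj E))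
    (hmu' : ∃ w : D.T.obj B.E2.P ⟶ D.T.obj (D.T.obj B.E2.P),
      w ≫ D.T.map (D.T.map B.E2.pr0)
          = D.T.map B.E2.pr0 ≫ D.T.map B.lam ≫ D.c.app E ∧
      w ≫ D.T.map (D.T.map B.E2.pr1)
          = D.T.map B.E2.pr1 ≫ D.zero.app (D.T.obj E) ∧
      mu' = w ≫ D.T.map (D.T.map B.addq))
    (W : P'.P ⟶ D.T.obj B.P.P)
    (hW0 : W ≫ D.T.map B.P.pr0 = P'.pr0 ≫ D.c.app M)
    (hW1 : W ≫ D.T.map B.P.pr1 = P'.pr1) :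
    IsConnectionPair D (D.T.map B.q) (D.T.map B.lam ≫ D.c.app E)
      B.TE2.toChosenPB (D.T.map B.zeroq) mu' P'
      (D.c.app E ≫ D.T.map K) (W ≫ D.T.map H ≫ D.c.app E) := by
  obtain ⟨hK, hH, hHK, R, hR0, hR1, hsum⟩ := hconn
  refine ⟨hK.tangent, hH.tangent B.TP hW0 hW1, ?_, D.c.app E ≫ D.T.map R, ?_, ?_, ?_⟩
  · rw [Category.assoc, Category.assoc, D.c_c_assoc, ← D.T.map_comp, hHK, D.T.map_comp,
      reassoc_of% hW1, D.T.map_comp]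
  · change (D.c.app E ≫ D.T.map R) ≫ D.T.map B.E2.pr0 = _
    rw [Category.assoc, ← D.T.map_comp, hR0]
  · change (D.c.app E ≫ D.T.map R) ≫ D.T.map B.E2.pr1 = _
    rw [Category.assoc, ← D.T.map_comp, hR1, D.c_map_p]
  have hRU : (R ≫ B.mu) ≫ D.p.app E = (D.hdesc B.q B.P ≫ H) ≫ D.p.app E := by
    rw [Category.assoc, B.mu_p, hR1, Category.assoc, hH.2.1, TangentCat.hdesc, B.P.pair_pr1]
  calc D.hadd ((D.c.app E ≫ D.T.map R) ≫ mu')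
        (D.hdesc (D.T.map B.q) P' ≫ W ≫ D.T.map H ≫ D.c.app E)
      = D.hadd (D.c.app E ≫ D.T.map (R ≫ B.mu) ≫ D.c.app E)
          (D.c.app E ≫ D.T.map (D.hdesc B.q B.P ≫ H) ≫ D.c.app E) := by
        rw [B.eq_map_mu_comp_c mu' hmu', ← reassoc_of% (TangentCat.c_comp_map_hdesc B.TP hW0 hW1)]
        simp only [Functor.map_comp, Category.assoc]
    _ = D.c.app E ≫ D.T.map (D.hadd (R ≫ B.mu) (D.hdesc B.q B.P ≫ H)) ≫ D.c.app E :=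
        (D.comp_map_hadd_comp_c _ hRU).symm
    _ = 𝟙 _ := by
        rw [hsum, D.T.map_id]
        exact (D.c.app E ≫= Category.id_comp _).trans (D.c_c E)

/-- If `(K,H)` is a connection on a differential bundle `𝗊`,
then `(cT(K), (c × 1)T(H)c)` is a connection on the differential bundle
`T(𝗊)`.  Here `P'` is the chosen pullback `T²(M) ×_{T(M)} T(E)` of `p_{T(M)}`
along `T(q)`, `W = c × 1 : P' → T(T(M) ×_M E)`, and `mu'` is the map `μ` of
the bundle `T(𝗊)`, i.e. `⟨π₀ T(λ)c, π₁ 0⟩ T²(+_q)` on `T(E₂)`. -/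
theorem stmt13 (D : TangentCat C) {E M : C} (B : DiffBundle D E M)
    (K : D.T.obj E ⟶ E) (H : B.P.P ⟶ D.T.obj E) (hconn : IsConnection B K H)
    (P' : ChosenPB (D.p.app (D.T.obj M)) (D.T.map B.q)) (TP' : PBLift D.T P')
    (TEP' : PBLift D.T B.TE2.toChosenPB)
    (mu' : D.T.obj B.E2.P ⟶ D.T.obj (D.T.obj E))
    (hmu' : ∃ w : D.T.obj B.E2.P ⟶ D.T.obj (D.T.obj B.E2.P),
      w ≫ D.T.map (D.T.map B.E2.pr0)
          = D.T.map B.E2.pr0 ≫ D.T.map B.lam ≫ D.c.app E ∧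
      w ≫ D.T.map (D.T.map B.E2.pr1)
          = D.T.map B.E2.pr1 ≫ D.zero.app (D.T.obj E) ∧
      mu' = w ≫ D.T.map (D.T.map B.addq))
    (W : P'.P ⟶ D.T.obj B.P.P)
    (hW0 : W ≫ D.T.map B.P.pr0 = P'.pr0 ≫ D.c.app M)
    (hW1 : W ≫ D.T.map B.P.pr1 = P'.pr1) :
    IsConnectionPair D (D.T.map B.q) (D.T.map B.lam ≫ D.c.app E)
      B.TE2.toChosenPB (D.T.map B.zeroq) mu' P'
      (D.c.app E ≫ D.T.map K) (W ≫ D.T.map H ≫ D.c.app E) :=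
  stmt13_general D B K H hconn P' mu' hmu' W hW0 hW1
end
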